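/- For any types A and B, the equi-recursive type equality ⊢ A ≐ B (derived with an empty assumption list in Brandt–Henglein's inductive system) holds if and only if there exists a cast operator c such that the type casting judgment ·;· ⊢ A ↪ B : c is derivable. -/
import Mathlib


/-- Types: Int, Top, arrow, de Bruijn type variables, and recursive types μ. -/
inductive Ty : Type
| int : Ty
| top : Ty
| arrow : Ty → Ty → Ty
| var : Nat → Ty
| mu : Ty → Ty
deriving DecidableEq

/-- Shifting of de Bruijn type variables. -/
def tshift (d c : Nat) : Ty → Ty
| .int => .int
| .top => .top
| .arrow A B => .arrow (tshift d c A) (tshift d c B)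
| .var n => if n < c then .var n else .var (n + d)
| .mu A => .mu (tshift d (c+1) A)

/-- Capture-avoiding substitution of type S for variable k. -/
def tsubst (k : Nat) (S : Ty) : Ty → Ty
| .int => .int
| .top => .top
| .arrow A B => .arrow (tsubst k S A) (tsubst k S B)
| .var n => if n = k then S else if k < n then .var (n-1) else .var n
| .mu A => .mu (tsubst (k+1) (tshift 1 0 S) A)

/-- Well-formedness: all free type variables are below n. -/
def Ty.wf : Nat → Ty → Prop
| _, .int => True
| _, .top => True
| n, .arrow A B => A.wf n ∧ B.wf n
| n, .var i => i < n
| n, .mu A => A.wf (n+1)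

/-- Brandt–Henglein inductive equi-recursive type equality H ⊢ A ≐ B. -/
inductive TyEq : List (Ty × Ty) → Ty → Ty → Prop
| assump : (A, B) ∈ H → TyEq H A B
| refl : TyEq H A A
| trans : TyEq H A B → TyEq H B C → TyEq H A C
| symm : TyEq H A B → TyEq H B A
| unfold : TyEq H (.mu A) (tsubst 0 (.mu A) A)
| arrfix : TyEq ((Ty.arrow A1 A2, Ty.arrow B1 B2) :: H) A1 B1 →
           TyEq ((Ty.arrow A1 A2, Ty.arrow B1 B2) :: H) A2 B2 →
           TyEq H (.arrow A1 A2) (.arrow B1 B2)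

/-- Cast operators, with de Bruijn cast variables (bound by cfix). -/
inductive Cast : Type
| cvar : Nat → Cast
| id : Cast
| fold : Ty → Cast
| unfold : Ty → Cast
| arrow : Cast → Cast → Cast
| seq : Cast → Cast → Cast
| cfix : Cast → Cast
deriving DecidableEq

/-- The dual (reverse) cast ¬c. -/
def Cast.dual : Cast → Cast
| .cvar i => .cvar i
| .id => .id
| .fold A => .unfold A
| .unfold A => .fold A
| .arrow c1 c2 => .arrow c1.dual c2.dual
| .seq c1 c2 => .seq c2.dual c1.dual
| .cfix c => .cfix c.dual

/-- Shifting of cast variables. -/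
def cshift (d c : Nat) : Cast → Cast
| .cvar n => if n < c then .cvar n else .cvar (n+d)
| .id => .id
| .fold A => .fold A
| .unfold A => .unfold A
| .arrow c1 c2 => .arrow (cshift d c c1) (cshift d c c2)
| .seq c1 c2 => .seq (cshift d c c1) (cshift d c c2)
| .cfix c1 => .cfix (cshift d (c+1) c1)

/-- Capture-avoiding substitution of a cast for cast variable k. -/
def csubst (k : Nat) (s : Cast) : Cast → Cast
| .cvar n => if n = k then s else if k < n then .cvar (n-1) else .cvar n
| .id => .id
| .fold A => .fold A
| .unfold A => .unfold A
| .arrow c1 c2 => .arrow (csubst k s c1) (csubst k s c2)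
| .seq c1 c2 => .seq (csubst k s c1) (csubst k s c2)
| .cfix c1 => .cfix (csubst (k+1) (cshift 1 0 s) c1)

/-- Type casting judgment 𝔼 ⊢ A ↪ B : c (cast context as de Bruijn list). -/
inductive TypCast : List (Ty × Ty) → Ty → Ty → Cast → Prop
| id : TypCast E A A .id
| arrow : TypCast E A1 B1 c1 → TypCast E A2 B2 c2 →
    TypCast E (.arrow A1 A2) (.arrow B1 B2) (.arrow c1 c2)
| unfold : TypCast E (.mu A) (tsubst 0 (.mu A) A) (.unfold (.mu A))
| fold : TypCast E (tsubst 0 (.mu A) A) (.mu A) (.fold (.mu A))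
| seq : TypCast E A B c1 → TypCast E B C c2 → TypCast E A C (.seq c1 c2)
| var : E[n]? = some (A, B) → TypCast E A B (.cvar n)
| fix : TypCast ((Ty.arrow A1 A2, Ty.arrow B1 B2) :: E)
           (.arrow A1 A2) (.arrow B1 B2) (.arrow c1 c2) →
        TypCast E (.arrow A1 A2) (.arrow B1 B2) (.cfix (.arrow c1 c2))

/-- Terms of λᵘFi (de Bruijn term variables). -/
inductive Tm : Type
| var : Nat → Tm
| lit : Int → Tm
| app : Tm → Tm → Tm
| abs : Ty → Tm → Tm
| cast : Cast → Tm → Tm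
deriving DecidableEq

def shiftTm (d c : Nat) : Tm → Tm
| .var n => if n < c then .var n else .var (n+d)
| .lit n => .lit n
| .app a b => .app (shiftTm d c a) (shiftTm d c b)
| .abs A e => .abs A (shiftTm d (c+1) e)
| .cast cc e => .cast cc (shiftTm d c e)

/-- Capture-avoiding term substitution. -/
def substTm (k : Nat) (s : Tm) : Tm → Tm
| .var n => if n = k then s else if k < n then .var (n-1) else .var n
| .lit n => .lit n
| .app a b => .app (substTm k s a) (substTm k s b)
| .abs A e => .abs A (substTm (k+1) (shiftTm 1 0 s) e)
| .cast cc e => .cast cc (substTm k s e)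

/-- Values of λᵘFi. -/
inductive Value : Tm → Prop
| lit : Value (.lit n)
| abs : Value (.abs A e)
| fold : Value v → Value (.cast (.fold A) v)
| arrow : Value v → Value (.cast (.arrow c1 c2) v)

/-- Call-by-value reduction of λᵘFi, including the cast push rules. -/
inductive Step : Tm → Tm → Prop
| beta : Value v → Step (.app (.abs A e) v) (substTm 0 v e)
| appl : Step e1 e1' → Step (.app e1 e2) (.app e1' e2)
| appr : Value v → Step e2 e2' → Step (.app v e2) (.app v e2')
| cast : Step e e' → Step (.cast c e) (.cast c e')
| castId : Value v → Step (.cast .id v) v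
| castArr : Value v1 → Value v2 →
    Step (.app (.cast (.arrow c1 c2) v1) v2)
         (.cast c2 (.app v1 (.cast c1.dual v2)))
| castSeq : Step (.cast (.seq c1 c2) e) (.cast c2 (.cast c1 e))
| castElim : Value v → Step (.cast (.unfold A) (.cast (.fold B) v)) v
| castFix : Step (.cast (.cfix c) e) (.cast (csubst 0 (.cfix c) c) e)

/-- Equi-recursive (cast-free) call-by-value reduction. -/
inductive EStep : Tm → Tm → Prop
| beta : Value v → EStep (.app (.abs A e) v) (substTm 0 v e)
| appl : EStep e1 e1' → EStep (.app e1 e2) (.app e1' e2)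
| appr : Value v → EStep e2 e2' → EStep (.app v e2) (.app v e2')

/-- Erasure of casts. -/
def erase : Tm → Tm
| .var n => .var n
| .lit n => .lit n
| .app a b => .app (erase a) (erase b)
| .abs A e => .abs A (erase e)
| .cast _ e => erase e

/-- Typing of λᵘFi. -/
inductive Typing : List Ty → Tm → Ty → Prop
| var : G[n]? = some A → Typing G (.var n) A
| lit : Typing G (.lit n) .int
| abs : Typing (A :: G) e B → Typing G (.abs A e) (.arrow A B)
| app : Typing G e1 (.arrow A B) → Typing G e2 A → Typing G (.app e1 e2) B
| cast : Typing G e A → TypCast [] A B c → Typing G (.cast c e) B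

/-- Equi-recursive typing with elaboration Γ ⊢ₑ e : A ▷ e'. -/
inductive ETyping : List Ty → Tm → Ty → Tm → Prop
| var : G[n]? = some A → ETyping G (.var n) A (.var n)
| lit : ETyping G (.lit n) .int (.lit n)
| abs : ETyping (A :: G) e B e' → ETyping G (.abs A e) (.arrow A B) (.abs A e')
| app : ETyping G e1 (.arrow A B) e1' → ETyping G e2 A e2' →
        ETyping G (.app e1 e2) B (.app e1' e2')
| eq : ETyping G e A e' → TypCast [] A B c → ETyping G e B (.cast c e')

/-- Iso-recursive Amber subtyping (de Bruijn presentation), n counts bound variable pairs. -/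
inductive AmberSub : Nat → Ty → Ty → Prop
| top : Ty.wf n A → AmberSub n A .top
| int : AmberSub n .int .int
| var : i < n → AmberSub n (.var i) (.var i)
| self : Ty.wf n (.mu A) → AmberSub n (.mu A) (.mu A)
| arrow : AmberSub n B1 A1 → AmberSub n A2 B2 → AmberSub n (.arrow A1 A2) (.arrow B1 B2)
| murec : AmberSub (n+1) A B → AmberSub n (.mu A) (.mu B)

/-- Typing of λᵘ<:Fi: λᵘFi typing plus subsumption. -/
inductive STyping : List Ty → Tm → Ty → Prop
| var : G[n]? = some A → STyping G (.var n) A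
| lit : STyping G (.lit n) .int
| abs : STyping (A :: G) e B → STyping G (.abs A e) (.arrow A B)
| app : STyping G e1 (.arrow A B) → STyping G e2 A → STyping G (.app e1 e2) B
| cast : STyping G e A → TypCast [] A B c → STyping G (.cast c e) B
| sub : STyping G e A → AmberSub 0 A B → STyping G e B

/-- Divergence under a reduction relation. -/
def Diverges (R : Tm → Tm → Prop) (e : Tm) : Prop :=
  ∀ e', Relation.ReflTransGen R e e' → ∃ e'', R e' e''

/-- Invariant: every hypothesis in H is derivable in both directions in E. -/
def CInv (H E : List (Ty × Ty)) : Prop :=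
  ∀ X Y, (X, Y) ∈ H → (∃ c, TypCast E X Y c) ∧ (∃ c, TypCast E Y X c)

lemma tc_weaken_gen {E A B c} (h : TypCast E A B c) :
    ∀ E1 E2 p, E = E1 ++ E2 →
      TypCast (E1 ++ p :: E2) A B (cshift 1 E1.length c) := by
  induction h with
  | id => intro E1 E2 p _; exact TypCast.id
  | arrow h1 h2 ih1 ih2 =>
      intro E1 E2 p he
      exact TypCast.arrow (ih1 _ _ _ he) (ih2 _ _ _ he)
  | unfold => intros; exact TypCast.unfold
  | fold => intros; exact TypCast.fold
  | seq h1 h2 ih1 ih2 =>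
      intro E1 E2 p he
      exact TypCast.seq (ih1 _ _ _ he) (ih2 _ _ _ he)
  | var hn =>
      rename_i E' n X Y
      intro E1 E2 p he; subst he
      simp only [cshift]
      split
      · rename_i hlt
        refine TypCast.var ?_
        rw [List.getElem?_append_left hlt]
        rwa [List.getElem?_append_left hlt] at hn
      · rename_i hge
        have hle : E1.length ≤ n := by omega
        refine TypCast.var ?_
        rw [List.getElem?_append_right (by omega : E1.length ≤ n + 1)]
        have h2 : n + 1 - E1.length = (n - E1.length) + 1 := by omega
        rw [h2]
        simp only [List.getElem?_cons_succ]
        rwa [List.getElem?_append_right hle] at hn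
  | fix h ih =>
      intro E1 E2 p he; subst he
      have := ih (_ :: E1) E2 p rfl
      simp only [List.cons_append, List.length_cons, cshift] at this
      exact TypCast.fix this

lemma tc_weak {E X Y c} (h : TypCast E X Y c) (p : Ty × Ty) :
    TypCast (p :: E) X Y (cshift 1 0 c) :=
  tc_weaken_gen h [] E p rfl

lemma cinv_cons {H E} (h : CInv H E) (p : Ty × Ty) : CInv H (p :: E) := by
  intro X Y hm
  obtain ⟨⟨c1, h1⟩, ⟨c2, h2⟩⟩ := h X Y hm
  exact ⟨⟨_, tc_weak h1 p⟩, ⟨_, tc_weak h2 p⟩⟩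

lemma tyeq_sound {H A B} (h : TyEq H A B) :
    ∀ E, CInv H E → (∃ c, TypCast E A B c) ∧ (∃ c, TypCast E B A c) := by
  induction h with
  | assump hm => intro E hinv; exact hinv _ _ hm
  | refl => intro E _; exact ⟨⟨_, TypCast.id⟩, ⟨_, TypCast.id⟩⟩
  | trans h1 h2 ih1 ih2 =>
      intro E hinv
      obtain ⟨⟨c1, hc1⟩, ⟨c1', hc1'⟩⟩ := ih1 E hinv
      obtain ⟨⟨c2, hc2⟩, ⟨c2', hc2'⟩⟩ := ih2 E hinv
      exact ⟨⟨_, TypCast.seq hc1 hc2⟩, ⟨_, TypCast.seq hc2' hc1'⟩⟩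
  | symm h ih =>
      intro E hinv
      obtain ⟨h1, h2⟩ := ih E hinv
      exact ⟨h2, h1⟩
  | unfold => intro E _; exact ⟨⟨_, TypCast.unfold⟩, ⟨_, TypCast.fold⟩⟩
  | arrfix h1 h2 ih1 ih2 =>
      rename_i A1 A2 B1 B2 H'
      intro E hinv
      have hinv2 : CInv ((Ty.arrow A1 A2, Ty.arrow B1 B2) :: H') ((Ty.arrow B1 B2, Ty.arrow A1 A2) :: (Ty.arrow A1 A2, Ty.arrow B1 B2) :: E) := by
        intro X Y hm
        rcases List.mem_cons.mp hm with heq | hm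
        simp only [Prod.mk.injEq] at heq
        obtain ⟨rfl, rfl⟩ := heq
        · constructor
          · exact ⟨_, TypCast.var (n := 1) (by simp)⟩
          · exact ⟨_, TypCast.var (n := 0) (by simp)⟩
        · exact cinv_cons (cinv_cons hinv _) _ X Y hm
      have hinv2' : CInv ((Ty.arrow A1 A2, Ty.arrow B1 B2) :: H') ((Ty.arrow A1 A2, Ty.arrow B1 B2) :: (Ty.arrow B1 B2, Ty.arrow A1 A2) :: E) := by
        intro X Y hm
        rcases List.mem_cons.mp hm with heq | hm
        simp only [Prod.mk.injEq] at heq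
        obtain ⟨rfl, rfl⟩ := heq
        · constructor
          · exact ⟨_, TypCast.var (n := 0) (by simp)⟩
          · exact ⟨_, TypCast.var (n := 1) (by simp)⟩
        · exact cinv_cons (cinv_cons hinv _) _ X Y hm
      have hinv1 : CInv ((Ty.arrow A1 A2, Ty.arrow B1 B2) :: H') ((Ty.arrow A1 A2, Ty.arrow B1 B2) :: E) := by
        intro X Y hm
        rcases List.mem_cons.mp hm with heq | hm
        simp only [Prod.mk.injEq] at heq
        obtain ⟨rfl, rfl⟩ := heq
        · constructor
          · exact ⟨_, TypCast.var (n := 0) (by simp)⟩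
          · obtain ⟨e1, he1⟩ := (ih1 _ hinv2).2
            obtain ⟨e2, he2⟩ := (ih2 _ hinv2).2
            exact ⟨_, TypCast.fix (TypCast.arrow he1 he2)⟩
        · exact cinv_cons hinv _ X Y hm
      have hinv1' : CInv ((Ty.arrow A1 A2, Ty.arrow B1 B2) :: H') ((Ty.arrow B1 B2, Ty.arrow A1 A2) :: E) := by
        intro X Y hm
        rcases List.mem_cons.mp hm with heq | hm
        simp only [Prod.mk.injEq] at heq
        obtain ⟨rfl, rfl⟩ := heq
        · constructor
          · obtain ⟨e1, he1⟩ := (ih1 _ hinv2').1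
            obtain ⟨e2, he2⟩ := (ih2 _ hinv2').1
            exact ⟨_, TypCast.fix (TypCast.arrow he1 he2)⟩
          · exact ⟨_, TypCast.var (n := 0) (by simp)⟩
        · exact cinv_cons hinv _ X Y hm
      constructor
      · obtain ⟨c1, hc1⟩ := (ih1 _ hinv1).1
        obtain ⟨c2, hc2⟩ := (ih2 _ hinv1).1
        exact ⟨_, TypCast.fix (TypCast.arrow hc1 hc2)⟩
      · obtain ⟨c1, hc1⟩ := (ih1 _ hinv1').2
        obtain ⟨c2, hc2⟩ := (ih2 _ hinv1').2
        exact ⟨_, TypCast.fix (TypCast.arrow hc1 hc2)⟩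

lemma tyeq_weaken {H A B} (h : TyEq H A B) : ∀ H', H ⊆ H' → TyEq H' A B := by
  induction h with
  | assump hm => intro H' hs; exact TyEq.assump (hs hm)
  | refl => intro _ _; exact TyEq.refl
  | trans _ _ ih1 ih2 => intro H' hs; exact TyEq.trans (ih1 _ hs) (ih2 _ hs)
  | symm _ ih => intro H' hs; exact TyEq.symm (ih _ hs)
  | unfold => intro _ _; exact TyEq.unfold
  | arrfix _ _ ih1 ih2 =>
      intro H' hs
      exact TyEq.arrfix (ih1 _ (List.cons_subset_cons _ hs))
        (ih2 _ (List.cons_subset_cons _ hs))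

lemma tc_arrow_inv {E A B c1 c2} (h : TypCast E A B (.arrow c1 c2)) :
    ∃ A1 A2 B1 B2, A = .arrow A1 A2 ∧ B = .arrow B1 B2 ∧
      TypCast E A1 B1 c1 ∧ TypCast E A2 B2 c2 := by
  cases h with
  | arrow h1 h2 => exact ⟨_, _, _, _, rfl, rfl, h1, h2⟩

lemma tc_complete_aux : ∀ n (c : Cast), sizeOf c ≤ n →
    ∀ E A B, TypCast E A B c → TyEq E A B := by
  intro n
  induction n with
  | zero =>
      intro c hc
      cases c <;> simp at hc
  | succ n ih =>
      intro c hc E A B h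
      cases h with
      | id => exact TyEq.refl
      | arrow h1 h2 =>
          rename_i A1 B1 c1 A2 B2 c2
          have s1 : sizeOf c1 ≤ n := by simp at hc; omega
          have s2 : sizeOf c2 ≤ n := by simp at hc; omega
          have t1 := ih c1 s1 _ _ _ h1
          have t2 := ih c2 s2 _ _ _ h2
          exact TyEq.arrfix
            (tyeq_weaken t1 _ (List.subset_cons_self _ _))
            (tyeq_weaken t2 _ (List.subset_cons_self _ _))
      | unfold => exact TyEq.unfold
      | fold => exact TyEq.symm TyEq.unfold
      | seq h1 h2 =>
          rename_i B' c1 c2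
          have s1 : sizeOf c1 ≤ n := by simp at hc; omega
          have s2 : sizeOf c2 ≤ n := by simp at hc; omega
          exact TyEq.trans (ih c1 s1 _ _ _ h1) (ih c2 s2 _ _ _ h2)
      | var hn => exact TyEq.assump (List.mem_of_getElem? hn)
      | fix h' =>
          rename_i A1 A2 B1 B2 c1 c2
          obtain ⟨A1', A2', B1', B2', hA, hB, h1, h2⟩ := tc_arrow_inv h'
          obtain ⟨rfl, rfl⟩ := Ty.arrow.inj hA
          obtain ⟨rfl, rfl⟩ := Ty.arrow.inj hB
          have s1 : sizeOf c1 ≤ n := by simp at hc; omega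
          have s2 : sizeOf c2 ≤ n := by simp at hc; omega
          exact TyEq.arrfix (ih c1 s1 _ _ _ h1) (ih c2 s2 _ _ _ h2)

/-- Soundness and completeness of type casting w.r.t. Brandt–Henglein equality. -/
theorem cast_sound_complete (A B : Ty) :
    TyEq [] A B ↔ ∃ c : Cast, TypCast [] A B c := by
  constructor
  · intro h
    exact (tyeq_sound h [] (by intro X Y hm; simp at hm)).1
  · rintro ⟨c, hc⟩
    exact tc_complete_aux (sizeOf c) c le_rfl _ _ _ hc
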